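/- arXiv:1703.06340 — 3 statements merged into one kernel-verified Lean document; each statement's English description precedes it below -/
import Mathlib

section
/- (First recurrence formula for the Euler–Poisson–Darboux equation.) Let γ = (γ_1,…,γ_n) be a multi-index with all γ_i > 0, let k ∈ ℝ, and let u = u(x,t) be a twice continuously differentiable solution of Δ_γ u = u_tt + ((2−k)/t) u_t for x ∈ ℝ^n_+, t > 0. Then v(x,t) = t^{1−k} u(x,t) solves Δ_γ v = v_tt + (k/t) v_t for x ∈ ℝ^n_+, t > 0. -/
open MeasureTheory Real Set Filter

noncomputable section

/-- Partial derivative in the `i`-th coordinate. -/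
def pderiv' {n : ℕ} (i : Fin n) (f : (Fin n → ℝ) → ℝ) (x : Fin n → ℝ) : ℝ :=
  deriv (fun t => f (Function.update x i t)) (x i)

/-- The Laplace–Bessel operator `Δ_γ = Σ_i (∂²/∂x_i² + (γ_i/x_i) ∂/∂x_i)`. -/
def laplaceBessel {n : ℕ} (γ : Fin n → ℝ) (f : (Fin n → ℝ) → ℝ) (x : Fin n → ℝ) : ℝ :=
  ∑ i, (pderiv' i (pderiv' i f) x + γ i / x i * pderiv' i f x)

open Topology

theorem pderiv'_const_mul {n : ℕ} (i : Fin n) (c : ℝ) (f : (Fin n → ℝ) → ℝ) :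
    pderiv' i (fun y => c * f y) = fun y => c * pderiv' i f y := by
  funext y
  simp only [pderiv', deriv_const_mul_field]

theorem laplaceBessel_const_mul {n : ℕ} (γ : Fin n → ℝ) (c : ℝ)
    (f : (Fin n → ℝ) → ℝ) (x : Fin n → ℝ) :
    laplaceBessel γ (fun y => c * f y) x = c * laplaceBessel γ f x := by
  simp only [laplaceBessel, pderiv'_const_mul, Finset.mul_sum]
  exact Finset.sum_congr rfl fun i _ => by ring

theorem isOpen_setOf_forall_pos_and_pos {ι : Type*} [Finite ι] :
    IsOpen {p : (ι → ℝ) × ℝ | (∀ i, 0 < p.1 i) ∧ 0 < p.2} := by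
  have hpos : IsOpen {x : ι → ℝ | ∀ i, 0 < x i} := by
    simpa [Set.pi] using
      isOpen_set_pi Set.finite_univ fun (_ : ι) _ => isOpen_Ioi (a := (0 : ℝ))
  exact (hpos.preimage continuous_fst).inter (isOpen_lt continuous_const continuous_snd)

section RpowMul

variable {g : ℝ → ℝ} {t : ℝ} (a : ℝ)

theorem deriv_rpow_mul (ht : 0 < t) (hg : DifferentiableAt ℝ g t) :
    deriv (fun s => s ^ a * g s) t = a * t ^ (a - 1) * g t + t ^ a * deriv g t :=
  ((hasDerivAt_rpow_const (Or.inl ht.ne')).mul hg.hasDerivAt).deriv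

theorem deriv_deriv_rpow_mul (ht : 0 < t) (hg : ContDiffAt ℝ 2 g t) :
    deriv (deriv fun s => s ^ a * g s) t
      = a * (a - 1) * t ^ (a - 2) * g t + 2 * a * t ^ (a - 1) * deriv g t
        + t ^ a * deriv (deriv g) t := by
  have hderiv : deriv (fun s => s ^ a * g s)
      =ᶠ[𝓝 t] fun s => a * s ^ (a - 1) * g s + s ^ a * deriv g s := by
    filter_upwards [eventually_gt_nhds ht, hg.eventually (by simp)] with s hs hgs
    exact deriv_rpow_mul a hs (hgs.differentiableAt two_ne_zero)
  have hg' : DifferentiableAt ℝ (deriv g) t :=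
    (hg.derivWithin (m := 1) (by norm_num)).differentiableAt one_ne_zero
  have hD : HasDerivAt (fun s => a * s ^ (a - 1) * g s + s ^ a * deriv g s)
      (a * ((a - 1) * t ^ (a - 1 - 1)) * g t + a * t ^ (a - 1) * deriv g t
        + (a * t ^ (a - 1) * deriv g t + t ^ a * deriv (deriv g) t)) t :=
    (((hasDerivAt_rpow_const (Or.inl ht.ne')).const_mul a).mul
      (hg.differentiableAt two_ne_zero).hasDerivAt).add
      ((hasDerivAt_rpow_const (Or.inl ht.ne')).mul hg'.hasDerivAt)
  rw [hderiv.deriv_eq, hD.deriv, sub_sub, one_add_one_eq_two]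
  ring

/-- With `a = 1 - k`, the coefficient of `g` is `a (a - 1) + k a = 0` and that of `g'` is
`2 a + k = 2 - k`. -/
theorem deriv_deriv_add_div_mul_deriv_rpow_one_sub_mul (k : ℝ) (ht : 0 < t)
    (hg : ContDiffAt ℝ 2 g t) :
    deriv (deriv fun s => s ^ (1 - k) * g s) t + k / t * deriv (fun s => s ^ (1 - k) * g s) t
      = t ^ (1 - k) * (deriv (deriv g) t + (2 - k) / t * deriv g t) := by
  rw [deriv_deriv_rpow_mul _ ht hg, deriv_rpow_mul _ ht (hg.differentiableAt two_ne_zero),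
    rpow_sub_one ht.ne', rpow_sub ht _ 2, rpow_two]
  field_simp
  ring

end RpowMul

theorem EPD_first_recurrence_general
    (n : ℕ) (γ : Fin n → ℝ) (k : ℝ)
    (u : (Fin n → ℝ) → ℝ → ℝ)
    (hu : ContDiffOn ℝ 2 (fun p : (Fin n → ℝ) × ℝ => u p.1 p.2)
      {p | (∀ i, 0 < p.1 i) ∧ 0 < p.2})
    (hpde : ∀ x : Fin n → ℝ, (∀ i, 0 < x i) → ∀ t : ℝ, 0 < t →
      laplaceBessel γ (fun x' => u x' t) x
        = deriv (deriv (u x)) t + (2 - k) / t * deriv (u x) t) :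
    ∀ x : Fin n → ℝ, (∀ i, 0 < x i) → ∀ t : ℝ, 0 < t →
      laplaceBessel γ (fun x' => t ^ (1 - k) * u x' t) x
        = deriv (deriv (fun s : ℝ => s ^ (1 - k) * u x s)) t
            + k / t * deriv (fun s : ℝ => s ^ (1 - k) * u x s) t := by
  intro x hx t ht
  have hslice : ContDiffAt ℝ 2 (u x) t :=
    (hu.contDiffAt (isOpen_setOf_forall_pos_and_pos.mem_nhds ⟨hx, ht⟩)).comp t
      (contDiffAt_const.prodMk contDiffAt_id)
  rw [laplaceBessel_const_mul, hpde x hx t ht,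
    deriv_deriv_add_div_mul_deriv_rpow_one_sub_mul k ht hslice]

/-- First recurrence formula for the Euler–Poisson–Darboux equation.
If `u` is a twice continuously differentiable solution of `Δ_γ u = u_tt + ((2-k)/t) u_t` on
`ℝ^n_+ × (0,∞)`, then `v(x,t) = t^{1-k} u(x,t)` solves `Δ_γ v = v_tt + (k/t) v_t` there. -/
theorem EPD_first_recurrence
    (n : ℕ) (γ : Fin n → ℝ) (hγ : ∀ i, 0 < γ i) (k : ℝ)
    (u : (Fin n → ℝ) → ℝ → ℝ)
    (hu : ContDiffOn ℝ 2 (fun p : (Fin n → ℝ) × ℝ => u p.1 p.2)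
      {p | (∀ i, 0 < p.1 i) ∧ 0 < p.2})
    (hpde : ∀ x : Fin n → ℝ, (∀ i, 0 < x i) → ∀ t : ℝ, 0 < t →
      laplaceBessel γ (fun x' => u x' t) x
        = deriv (deriv (u x)) t + (2 - k) / t * deriv (u x) t) :
    ∀ x : Fin n → ℝ, (∀ i, 0 < x i) → ∀ t : ℝ, 0 < t →
      laplaceBessel γ (fun x' => t ^ (1 - k) * u x' t) x
        = deriv (deriv (fun s : ℝ => s ^ (1 - k) * u x s)) t
            + k / t * deriv (fun s : ℝ => s ^ (1 - k) * u x s) t :=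
  EPD_first_recurrence_general n γ k u hu hpde
end
end

section
/- Let γ = (γ_1,…,γ_n) be a multi-index with all γ_i > 0 and let u = u(x,t) be a solution of Δ_γ u = u_tt − (1/t) u_t (the Euler–Poisson–Darboux equation with parameter k = −1) for x ∈ ℝ^n_+, t > 0, satisfying u(x,0) = f(x) and u_t(x,0) = 0. If the second derivative u_tt(x,0) exists (i.e., u_tt extends continuously to t = 0), then Δ_γ f(x) = 0, i.e. f is B-harmonic; in this case u(x,t) = f(x) is a solution of this Cauchy problem. -/
/-!
Fix `x` in the open orthant and put `g(t) = Δ_γ u(·, t)(x)`. Since `u` is `C²` up to `t = 0`,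
`g` is a finite sum of second and first derivatives of `u` evaluated at `(x, t)`, hence
continuous on `t ≥ 0`, with `g(0) = Δ_γ f(x)`. The equation reads `u_t / t = u_tt - g` for
`t > 0`; the right side has a limit as `t → 0⁺`, so `u_t(x, 0⁺) = 0`, and then l'Hôpital gives
`u_t / t → u_tt(x, 0⁺)`. Comparing the two limits yields `Δ_γ f(x) = g(0) = 0`.
-/

open MeasureTheory Real Set Filter

noncomputable section

open Topology Function

theorem eq_zero_of_tendsto_deriv_deriv_sub_inv_mul_deriv {w g : ℝ → ℝ} {a b : ℝ}
    (hw : ∀ t, 0 < t → DifferentiableAt ℝ (deriv w) t)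
    (hw'' : Tendsto (deriv (deriv w)) (𝓝[>] 0) (𝓝 a)) (hg : Tendsto g (𝓝[>] 0) (𝓝 b))
    (heq : ∀ t, 0 < t → g t = deriv (deriv w) t - 1 / t * deriv w t) : b = 0 := by
  have hquot : Tendsto (fun t => deriv w t / t) (𝓝[>] 0) (𝓝 (a - b)) := by
    refine (hw''.sub hg).congr' ?_
    filter_upwards [self_mem_nhdsWithin] with t ht
    rw [heq t ht]
    ring
  have hid : Tendsto (fun t : ℝ => t) (𝓝[>] 0) (𝓝 0) :=
    tendsto_nhdsWithin_of_tendsto_nhds tendsto_id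
  have hw' : Tendsto (deriv w) (𝓝[>] 0) (𝓝 0) := by
    refine (mul_zero (a - b) ▸ hquot.mul hid).congr' ?_
    filter_upwards [self_mem_nhdsWithin] with t ht
    exact div_mul_cancel₀ _ (ne_of_gt ht)
  have hlhop : Tendsto (fun t => deriv w t / t) (𝓝[>] 0) (𝓝 a) := by
    refine HasDerivAt.lhopital_zero_right_on_Ioo one_pos (fun t ht => (hw t ht.1).hasDerivAt)
      (fun t _ => hasDerivAt_id t) (fun _ _ => one_ne_zero) hw' hid ?_
    simpa using hw''
  linarith [tendsto_nhds_unique hquot hlhop]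

section

variable {E F : Type*} [NormedAddCommGroup E] [NormedSpace ℝ E] [NormedAddCommGroup F]
  [NormedSpace ℝ F] {U : E → F} {S : Set E} {c : ℝ → E} {v : E} {s₀ : ℝ}

theorem deriv_comp_eventuallyEq_fderivWithin (hU : DifferentiableOn ℝ U S)
    (hc : ∀ s, HasDerivAt c v s) (hcS : ∀ᶠ s in 𝓝 s₀, c s ∈ S) :
    deriv (U ∘ c) =ᶠ[𝓝 s₀] fun s => fderivWithin ℝ U S (c s) v := by
  filter_upwards [hcS.eventually_nhds] with s hs
  exact ((hU _ hs.self_of_nhds).hasFDerivWithinAt.comp_hasDerivAt s (hc s) hs).deriv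

theorem hasDerivAt_deriv_comp (hU : ContDiffOn ℝ 2 U S) (hS : UniqueDiffOn ℝ S)
    (hc : ∀ s, HasDerivAt c v s) (hcS : ∀ᶠ s in 𝓝 s₀, c s ∈ S) :
    HasDerivAt (deriv (U ∘ c)) (iteratedFDerivWithin ℝ 2 U S (c s₀) ![v, v]) s₀ := by
  have hDU : DifferentiableOn ℝ (fderivWithin ℝ U S) S :=
    (hU.fderivWithin hS (by norm_num)).differentiableOn one_ne_zero
  rw [iteratedFDerivWithin_two_apply' U hS hcS.self_of_nhds]
  refine HasDerivAt.congr_of_eventuallyEq ?_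
    (deriv_comp_eventuallyEq_fderivWithin (hU.differentiableOn two_ne_zero) hc hcS)
  exact ((hDU _ hcS.self_of_nhds).hasFDerivWithinAt.comp_hasDerivAt s₀ (hc s₀) hcS).clm_apply
    (hasDerivAt_const s₀ v) |>.congr_deriv (by simp)

end

theorem tendsto_update_nhds {ι : Type*} [DecidableEq ι] {X : ι → Type*}
    [∀ i, TopologicalSpace (X i)] (x : ∀ i, X i) (i : ι) :
    Tendsto (update x i) (𝓝 (x i)) (𝓝 x) := by
  simpa using ((continuous_const (y := x)).update i continuous_id).tendsto (x i)

section

variable {n : ℕ} (γ : Fin n → ℝ) (g : (Fin n → ℝ) → ℝ) (x : Fin n → ℝ)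

theorem laplaceBessel_eq_sum_deriv : laplaceBessel γ g x =
    ∑ i, (deriv (deriv fun r => g (update x i r)) (x i)
      + γ i / x i * deriv (fun r => g (update x i r)) (x i)) := by
  have hline : ∀ i, (fun r => pderiv' i g (update x i r)) = deriv fun r => g (update x i r) :=
    fun i => funext fun r => by simp [pderiv']
  refine Finset.sum_congr rfl fun i _ => ?_
  change deriv (fun r => pderiv' i g (update x i r)) (x i) + _ = _
  rw [hline]
  rfl

variable {γ g x}

theorem laplaceBessel_congr {h : (Fin n → ℝ) → ℝ} (hgh : g =ᶠ[𝓝 x] h) :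
    laplaceBessel γ g x = laplaceBessel γ h x := by
  simp only [laplaceBessel_eq_sum_deriv]
  refine Finset.sum_congr rfl fun i _ => ?_
  have hline : (fun r => g (update x i r)) =ᶠ[𝓝 (x i)] fun r => h (update x i r) :=
    tendsto_update_nhds x i hgh
  rw [hline.deriv.deriv_eq, hline.deriv_eq]

end

section

variable {n : ℕ} {Y : Type*} [NormedAddCommGroup Y] [NormedSpace ℝ Y] {γ : Fin n → ℝ}
  {U : (Fin n → ℝ) × Y → ℝ} {O : Set (Fin n → ℝ)} {T : Set Y} {x : Fin n → ℝ}

theorem laplaceBessel_slice_eq_sum_iteratedFDerivWithin (hU : ContDiffOn ℝ 2 U (O ×ˢ T))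
    (hS : UniqueDiffOn ℝ (O ×ˢ T)) (hO : IsOpen O) (hx : x ∈ O) {y : Y} (hy : y ∈ T) :
    laplaceBessel γ (fun x' => U (x', y)) x =
      ∑ i, (iteratedFDerivWithin ℝ 2 U (O ×ˢ T) (x, y)
          ![(Pi.single i 1, 0), (Pi.single i 1, 0)]
        + γ i / x i * fderivWithin ℝ U (O ×ˢ T) (x, y) (Pi.single i 1, 0)) := by
  rw [laplaceBessel_eq_sum_deriv]
  refine Finset.sum_congr rfl fun i _ => ?_
  have hc : ∀ r, HasDerivAt (fun r => (update x i r, y))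
      ((Pi.single i 1 : Fin n → ℝ), (0 : Y)) r :=
    fun r => (hasDerivAt_update x i r).prodMk (hasDerivAt_const r y)
  have hcS : ∀ᶠ r in 𝓝 (x i), (update x i r, y) ∈ O ×ˢ T :=
    Eventually.mono (tendsto_update_nhds x i (hO.mem_nhds hx)) fun r hr => ⟨hr, hy⟩
  have h2 := (hasDerivAt_deriv_comp hU hS hc hcS).deriv
  have h1 := (deriv_comp_eventuallyEq_fderivWithin (hU.differentiableOn two_ne_zero) hc
    hcS).self_of_nhds
  simp only [update_eq_self] at h1 h2
  exact congr_arg₂ (· + γ i / x i * ·) h2 h1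

theorem continuousOn_laplaceBessel_slice (hU : ContDiffOn ℝ 2 U (O ×ˢ T))
    (hS : UniqueDiffOn ℝ (O ×ˢ T)) (hO : IsOpen O) (hx : x ∈ O) :
    ContinuousOn (fun y => laplaceBessel γ (fun x' => U (x', y)) x) T := by
  have hslice : MapsTo (fun y : Y => (x, y)) T (O ×ˢ T) := fun y hy => ⟨hx, hy⟩
  have hD2 := (hU.continuousOn_iteratedFDerivWithin le_rfl hS).comp
    (continuous_const.prodMk continuous_id).continuousOn hslice
  have hD := (hU.continuousOn_fderivWithin hS one_le_two).comp
    (continuous_const.prodMk continuous_id).continuousOn hslice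
  refine ContinuousOn.congr (continuousOn_finsetSum _ fun i _ => ?_)
    fun y hy => laplaceBessel_slice_eq_sum_iteratedFDerivWithin hU hS hO hx hy
  exact (hD2.eval_const _).add (continuousOn_const.mul (hD.clm_apply continuousOn_const))

end

theorem EPD_k_neg_one_general
    (n : ℕ) (γ : Fin n → ℝ)
    (u : (Fin n → ℝ) → ℝ → ℝ) (f : (Fin n → ℝ) → ℝ)
    (hu : ContDiffOn ℝ 2 (fun p : (Fin n → ℝ) × ℝ => u p.1 p.2)
      {p | (∀ i, 0 < p.1 i) ∧ 0 ≤ p.2})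
    (hpde : ∀ x : Fin n → ℝ, (∀ i, 0 < x i) → ∀ t : ℝ, 0 < t →
      laplaceBessel γ (fun x' => u x' t) x
        = deriv (deriv (u x)) t - (1 / t) * deriv (u x) t)
    (hinit : ∀ x : Fin n → ℝ, (∀ i, 0 < x i) → u x 0 = f x)
    (hutt : ∀ x : Fin n → ℝ, (∀ i, 0 < x i) →
      ∃ L : ℝ, Filter.Tendsto (fun t => deriv (deriv (u x)) t) (nhdsWithin 0 (Set.Ioi 0))
        (nhds L)) :
    (∀ x : Fin n → ℝ, (∀ i, 0 < x i) → laplaceBessel γ f x = 0)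
    ∧ ((∀ x : Fin n → ℝ, (∀ i, 0 < x i) → ∀ t : ℝ, 0 < t →
          laplaceBessel γ (fun x' => (fun (_ : ℝ) => f x') t) x
            = deriv (deriv (fun (_ : ℝ) => f x)) t
                - (1 / t) * deriv (fun (_ : ℝ) => f x) t)
        ∧ (∀ x : Fin n → ℝ, (∀ i, 0 < x i) → (fun (_ : ℝ) => f x) 0 = f x)
        ∧ (∀ x : Fin n → ℝ, (∀ i, 0 < x i) → deriv (fun (_ : ℝ) => f x) 0 = 0)) := by
  have hO : IsOpen {x : Fin n → ℝ | ∀ i, 0 < x i} := by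
    simpa only [ofPred_forall] using isOpen_iInter_of_finite fun i =>
      isOpen_lt continuous_const (continuous_apply i)
  have hS := hO.uniqueDiffOn.prod (uniqueDiffOn_Ici 0)
  have harmonic : ∀ x : Fin n → ℝ, (∀ i, 0 < x i) → laplaceBessel γ f x = 0 := by
    intro x hx
    obtain ⟨L, hL⟩ := hutt x hx
    have hf : (fun x' => u x' 0) =ᶠ[𝓝 x] f := Eventually.mono (hO.mem_nhds hx) hinit
    have hlim : Tendsto (fun t => laplaceBessel γ (fun x' => u x' t) x) (𝓝[>] 0)
        (𝓝 (laplaceBessel γ f x)) := by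
      rw [← laplaceBessel_congr hf]
      exact ((continuousOn_laplaceBessel_slice (U := fun p => u p.1 p.2) hu hS hO hx) 0
        self_mem_Ici).mono_left (nhdsWithin_mono _ Ioi_subset_Ici_self)
    refine eq_zero_of_tendsto_deriv_deriv_sub_inv_mul_deriv (fun t ht => ?_) hL hlim (hpde x hx)
    exact (hasDerivAt_deriv_comp (c := fun t => (x, t)) hu hS
      (fun t => (hasDerivAt_const t x).prodMk (hasDerivAt_id t))
      (Eventually.mono (Ioi_mem_nhds ht) fun s hs => ⟨hx, le_of_lt hs⟩)).differentiableAt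
  refine ⟨harmonic, fun x hx t _ => ?_, fun _ _ => rfl, fun x _ => deriv_const 0 (f x)⟩
  simp only [deriv_const', sub_zero, mul_zero]
  exact harmonic x hx

/-- Let `u` solve the Euler–Poisson–Darboux equation with parameter
`k = -1`, `Δ_γ u = u_tt - (1/t) u_t` (`x ∈ ℝ^n_+`, `t > 0`), with `u(x,0) = f(x)` and
`u_t(x,0) = 0`. If `u_tt` extends continuously to `t = 0` (i.e. `u_tt(x,0)` exists), then
`Δ_γ f = 0`, i.e. `f` is B-harmonic; in this case `u(x,t) = f(x)` is a solution of this
Cauchy problem. -/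
theorem EPD_k_neg_one
    (n : ℕ) (γ : Fin n → ℝ) (hγ : ∀ i, 0 < γ i)
    (u : (Fin n → ℝ) → ℝ → ℝ) (f : (Fin n → ℝ) → ℝ)
    (hu : ContDiffOn ℝ 2 (fun p : (Fin n → ℝ) × ℝ => u p.1 p.2)
      {p | (∀ i, 0 < p.1 i) ∧ 0 ≤ p.2})
    (hpde : ∀ x : Fin n → ℝ, (∀ i, 0 < x i) → ∀ t : ℝ, 0 < t →
      laplaceBessel γ (fun x' => u x' t) x
        = deriv (deriv (u x)) t - (1 / t) * deriv (u x) t)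
    (hinit : ∀ x : Fin n → ℝ, (∀ i, 0 < x i) → u x 0 = f x)
    (hinit' : ∀ x : Fin n → ℝ, (∀ i, 0 < x i) → deriv (u x) 0 = 0)
    (hutt : ∀ x : Fin n → ℝ, (∀ i, 0 < x i) →
      ∃ L : ℝ, Filter.Tendsto (fun t => deriv (deriv (u x)) t) (nhdsWithin 0 (Set.Ioi 0))
        (nhds L)) :
    (∀ x : Fin n → ℝ, (∀ i, 0 < x i) → laplaceBessel γ f x = 0)
    ∧ ((∀ x : Fin n → ℝ, (∀ i, 0 < x i) → ∀ t : ℝ, 0 < t →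
          laplaceBessel γ (fun x' => (fun (_ : ℝ) => f x') t) x
            = deriv (deriv (fun (_ : ℝ) => f x)) t
                - (1 / t) * deriv (fun (_ : ℝ) => f x) t)
        ∧ (∀ x : Fin n → ℝ, (∀ i, 0 < x i) → (fun (_ : ℝ) => f x) 0 = f x)
        ∧ (∀ x : Fin n → ℝ, (∀ i, 0 < x i) → deriv (fun (_ : ℝ) => f x) 0 = 0)) :=
  EPD_k_neg_one_general n γ u f hu hpde hinit hutt
end
end

section
/- Let γ = (γ_1,…,γ_n) be a multi-index with all γ_i > 0, let k ∈ {−3, −5, −7, …}, and let f be a sufficiently smooth function on the closure of ℝ^n_+, even in each variable, that is B-polyharmonic of order (1−k)/2, i.e. Δ_γ^{(1−k)/2} f = 0. Then the function u^k(x,t) = f(x) + Σ_{h=1}^{−(k+1)/2} [Δ_γ^h f(x) / ((k+1)(k+3)⋯(k+2h−1))] · t^{2h}/(2·4⋯(2h)) solves the Cauchy problem Δ_γ u = u_tt + (k/t) u_t for x ∈ ℝ^n_+, t > 0, with u(x,0) = f(x) and u_t(x,0) = 0. -/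
/-!
`Δ_γ` is linear on functions that are `C²` on the open orthant, so applying it to
`u = Σ_{h ≤ N} t^{2h} Δ_γ^h f / c_h` shifts every `Δ_γ^h f` to `Δ_γ^{h+1} f`, and the top term
vanishes by polyharmonicity. In `t`, the Bessel operator `B_k = ∂_t² + (k/t) ∂_t` sends
`t^{2h+2}` to `(2h+2)(2h+1+k) t^{2h}`, which is exactly the ratio `c_{h+1} / c_h` of consecutive
denominators, so `B_k u` is the same sum. The factors `k + 1 + 2j` (`j ≤ m`) in the denominators
do not vanish because `k = -(2m+3)`.
-/

open MeasureTheory Real Set Filter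

noncomputable section

open Finset Function Topology

section PartialDerivative

variable {n : ℕ} {g : (Fin n → ℝ) → ℝ} {x : Fin n → ℝ}

theorem hasDerivAt_comp_update_fderiv (hg : DifferentiableAt ℝ g x) (i : Fin n) :
    HasDerivAt (fun s => g (update x i s)) (fderiv ℝ g x (Pi.single i 1)) (x i) := by
  have hg' : HasFDerivAt g (fderiv ℝ g x) (update x i (x i)) := by
    simpa using hg.hasFDerivAt
  exact hg'.comp_hasDerivAt (x i) (hasDerivAt_update x i (x i))

theorem pderiv'_eq_fderiv (hg : DifferentiableAt ℝ g x) (i : Fin n) :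
    pderiv' i g x = fderiv ℝ g x (Pi.single i 1) :=
  (hasDerivAt_comp_update_fderiv hg i).deriv

theorem hasDerivAt_comp_update_pderiv' (hg : DifferentiableAt ℝ g x) (i : Fin n) :
    HasDerivAt (fun s => g (update x i s)) (pderiv' i g x) (x i) := by
  simpa only [pderiv'_eq_fderiv hg] using hasDerivAt_comp_update_fderiv hg i

theorem Filter.EventuallyEq.pderiv'_eq {g₁ g₂ : (Fin n → ℝ) → ℝ} (h : g₁ =ᶠ[𝓝 x] g₂)
    (i : Fin n) : pderiv' i g₁ x = pderiv' i g₂ x := by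
  have hupdate : Tendsto (update x i) (𝓝 (x i)) (𝓝 x) := by
    simpa using (hasDerivAt_update x i (x i)).continuousAt.tendsto
  exact (h.comp_tendsto hupdate).deriv_eq

theorem pderiv'_sum {ι : Type*} {A : Finset ι} {G : ι → (Fin n → ℝ) → ℝ} (c : ι → ℝ)
    (hG : ∀ j ∈ A, DifferentiableAt ℝ (G j) x) (i : Fin n) :
    pderiv' i (fun y => ∑ j ∈ A, c j * G j y) x = ∑ j ∈ A, c j * pderiv' i (G j) x :=
  (HasDerivAt.fun_sum fun j hj =>
    (hasDerivAt_comp_update_pderiv' (hG j hj) i).const_mul (c j)).deriv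

variable {S : Set (Fin n → ℝ)}

theorem ContDiffOn.pderiv' {p : ℕ} (hg : ContDiffOn ℝ (p + 1) g S) (hS : IsOpen S)
    (i : Fin n) : ContDiffOn ℝ p (pderiv' i g) S := by
  refine ((hg.fderiv_of_isOpen hS le_rfl).clm_apply
    (contDiffOn_const (c := Pi.single i 1))).congr fun y hy => ?_
  exact pderiv'_eq_fderiv ((hg.differentiableOn (by simp)).differentiableAt
    (hS.mem_nhds hy)) i

end PartialDerivative

section LaplaceBessel

variable {n : ℕ} {S : Set (Fin n → ℝ)} (γ : Fin n → ℝ)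

theorem laplaceBessel_sum (hS : IsOpen S) {x : Fin n → ℝ} (hx : x ∈ S) {ι : Type*}
    {A : Finset ι} {G : ι → (Fin n → ℝ) → ℝ} (c : ι → ℝ)
    (hG : ∀ j ∈ A, ContDiffOn ℝ 2 (G j) S) :
    laplaceBessel γ (fun y => ∑ j ∈ A, c j * G j y) x
      = ∑ j ∈ A, c j * laplaceBessel γ (G j) x := by
  have hdiff : ∀ j ∈ A, ∀ y ∈ S, DifferentiableAt ℝ (G j) y := fun j hj y hy =>
    ((hG j hj).differentiableOn (by simp)).differentiableAt (hS.mem_nhds hy)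
  have hfirst : ∀ i, pderiv' i (fun y => ∑ j ∈ A, c j * G j y)
      =ᶠ[𝓝 x] fun y => ∑ j ∈ A, c j * pderiv' i (G j) y := fun i => by
    filter_upwards [hS.mem_nhds hx] with y hy using pderiv'_sum c (fun j hj => hdiff j hj y hy) i
  have hsecond : ∀ i, pderiv' i (pderiv' i (fun y => ∑ j ∈ A, c j * G j y)) x
      = ∑ j ∈ A, c j * pderiv' i (pderiv' i (G j)) x := fun i => by
    rw [(hfirst i).pderiv'_eq i]
    refine pderiv'_sum c (fun j hj => ?_) i
    have hG' : ContDiffOn ℝ ((1 : ℕ) + 1) (G j) S := by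
      rw [Nat.cast_one, one_add_one_eq_two]; exact hG j hj
    exact ((hG'.pderiv' hS i).differentiableOn (by simp)).differentiableAt (hS.mem_nhds hx)
  simp only [laplaceBessel, hsecond, pderiv'_sum c (fun j hj => hdiff j hj x hx)]
  calc _ = ∑ i, ∑ j ∈ A, c j * (pderiv' i (pderiv' i (G j)) x
          + γ i / x i * pderiv' i (G j) x) := by
        simp only [mul_sum, ← sum_add_distrib, mul_add, mul_left_comm]
    _ = _ := by rw [sum_comm]; simp only [mul_sum]

theorem ContDiffOn.laplaceBessel {g : (Fin n → ℝ) → ℝ} {p : ℕ} (hg : ContDiffOn ℝ (p + 2) g S)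
    (hS : IsOpen S) (hS0 : ∀ y ∈ S, ∀ i, y i ≠ 0) :
    ContDiffOn ℝ p (laplaceBessel γ g) S := by
  have hg' : ContDiffOn ℝ ((p + 1 : ℕ) + 1) g S := by
    convert hg using 1; push_cast; ring
  refine ContDiffOn.sum fun i _ => ((hg'.pderiv' hS i).pderiv' hS i).add ?_
  refine ContDiffOn.mul ?_ ((hg'.of_le (by push_cast; simp)).pderiv' hS i)
  exact contDiffOn_const.div (contDiff_apply ℝ ℝ i).contDiffOn fun y hy => hS0 y hy i

theorem contDiffOn_iterate_laplaceBessel (hS : IsOpen S) (hS0 : ∀ y ∈ S, ∀ i, y i ≠ 0)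
    (h : ℕ) {p : ℕ} {g : (Fin n → ℝ) → ℝ} (hg : ContDiffOn ℝ (2 * (p + h) : ℕ) g S) :
    ContDiffOn ℝ (2 * p : ℕ) ((laplaceBessel γ)^[h] g) S := by
  induction h generalizing g with
  | zero => simpa using hg
  | succ h ih =>
    rw [iterate_succ_apply]
    refine ih (ContDiffOn.laplaceBessel γ ?_ hS hS0)
    convert hg using 1; push_cast; ring

end LaplaceBessel

section BesselTime

def besselOp (ν : ℝ) (g : ℝ → ℝ) (t : ℝ) : ℝ :=
  deriv (deriv g) t + ν / t * deriv g t

variable (c : ℝ) (b : ℕ → ℝ) (N : ℕ)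

theorem hasDerivAt_const_add_sum_mul_pow (s : ℝ) :
    HasDerivAt (fun s => c + ∑ j ∈ range N, b j * s ^ (2 * (j + 1)))
      (∑ j ∈ range N, b j * ((2 * j + 2) * s ^ (2 * j + 1))) s := by
  refine (HasDerivAt.fun_sum fun j _ => ?_).const_add c
  have hpow : HasDerivAt (fun s : ℝ => s ^ (2 * (j + 1))) ((2 * j + 2) * s ^ (2 * j + 1)) s := by
    refine (hasDerivAt_pow (2 * (j + 1)) s).congr_deriv ?_
    rw [show 2 * (j + 1) - 1 = 2 * j + 1 by omega]
    push_cast; ring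
  exact hpow.const_mul (b j)

theorem deriv_const_add_sum_mul_pow :
    deriv (fun s => c + ∑ j ∈ range N, b j * s ^ (2 * (j + 1)))
      = fun s => ∑ j ∈ range N, b j * ((2 * j + 2) * s ^ (2 * j + 1)) :=
  funext fun s => (hasDerivAt_const_add_sum_mul_pow c b N s).deriv

theorem besselOp_const_add_sum_mul_pow (ν : ℝ) {t : ℝ} (ht : t ≠ 0) :
    besselOp ν (fun s => c + ∑ j ∈ range N, b j * s ^ (2 * (j + 1))) t
      = ∑ j ∈ range N, b j * ((2 * j + 2) * (2 * j + 1 + ν)) * t ^ (2 * j) := by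
  have hsecond : HasDerivAt (fun s => ∑ j ∈ range N, b j * ((2 * j + 2) * s ^ (2 * j + 1)))
      (∑ j ∈ range N, b j * ((2 * j + 2) * ((2 * j + 1) * t ^ (2 * j)))) t := by
    refine HasDerivAt.fun_sum fun j _ => ((?_ : HasDerivAt _ _ t).const_mul _).const_mul _
    simpa using hasDerivAt_pow (2 * j + 1) t
  rw [besselOp, deriv_const_add_sum_mul_pow, hsecond.deriv, mul_sum, ← sum_add_distrib]
  refine sum_congr rfl fun j _ => ?_
  field_simp
  ring

end BesselTime

theorem isOpen_setOf_forall_pos {ι : Type*} [Finite ι] : IsOpen {x : ι → ℝ | ∀ i, 0 < x i} := by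
  simp only [ofPred_forall]
  exact isOpen_iInter_of_finite fun i => isOpen_lt continuous_const (continuous_apply i)

section Solution

/-- `(k+1)(k+3)⋯(k+2h-1) · 2·4⋯(2h)`, the denominator of the `h`-th term of `u^k`. -/
def epdCoeff (k : ℝ) (h : ℕ) : ℝ :=
  ∏ j ∈ range h, ((k + 1 + 2 * j) * (2 * j + 2))

theorem epdCoeff_succ (k : ℝ) (h : ℕ) :
    epdCoeff k (h + 1) = epdCoeff k h * ((k + 1 + 2 * h) * (2 * h + 2)) :=
  prod_range_succ _ h

theorem epdCoeff_ne_zero {k : ℝ} {h : ℕ} (hk : ∀ j < h, k + 1 + 2 * (j : ℝ) ≠ 0) :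
    epdCoeff k h ≠ 0 :=
  prod_ne_zero_iff.mpr fun j hj => mul_ne_zero (hk j (mem_range.mp hj)) (by positivity)

variable {n : ℕ} (γ : Fin n → ℝ) (k : ℝ) (N : ℕ) (f : (Fin n → ℝ) → ℝ)

/-- The paper's `u^k`, with `N = -(k+1)/2`. -/
def epdSeries (x : Fin n → ℝ) (t : ℝ) : ℝ :=
  ∑ h ∈ range (N + 1), t ^ (2 * h) / epdCoeff k h * (laplaceBessel γ)^[h] f x

theorem add_sum_Icc_eq_epdSeries (x : Fin n → ℝ) (t : ℝ) :
    f x + ∑ h ∈ Icc 1 N, ((laplaceBessel γ)^[h] f x / ∏ j ∈ range h, (k + 1 + 2 * (j : ℝ)))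
        * t ^ (2 * h) / ∏ j ∈ range h, (2 * (j : ℝ) + 2)
      = epdSeries γ k N f x t := by
  rw [epdSeries, sum_range_succ', ← Finset.Ico_add_one_right_eq_Icc, sum_Ico_eq_sum_range,
    add_comm]
  simp only [epdCoeff, prod_mul_distrib, add_tsub_cancel_right, range_zero]
  congr 1
  · exact sum_congr rfl fun j _ => by rw [add_comm 1 j]; ring
  · simp

theorem epdSeries_eq_add_sum (x : Fin n → ℝ) :
    epdSeries γ k N f x = fun s => f x + ∑ j ∈ range N,
      (laplaceBessel γ)^[j + 1] f x / epdCoeff k (j + 1) * s ^ (2 * (j + 1)) := by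
  funext s
  rw [epdSeries, sum_range_succ', add_comm]
  congr 1
  · simp [epdCoeff]
  · exact sum_congr rfl fun j _ => by ring

theorem laplaceBessel_epdSeries {S : Set (Fin n → ℝ)} (hS : IsOpen S)
    (hS0 : ∀ y ∈ S, ∀ i, y i ≠ 0) (hf : ContDiffOn ℝ (2 * (N + 1) : ℕ) f S)
    {x : Fin n → ℝ} (hx : x ∈ S) (t : ℝ) :
    laplaceBessel γ (fun y => epdSeries γ k N f y t) x
      = ∑ h ∈ range (N + 1), t ^ (2 * h) / epdCoeff k h * (laplaceBessel γ)^[h + 1] f x := by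
  have hsmooth : ∀ h ∈ range (N + 1), ContDiffOn ℝ 2 ((laplaceBessel γ)^[h] f) S := by
    intro h hh
    have hfh : ContDiffOn ℝ (2 * (1 + h) : ℕ) f S :=
      hf.of_le (by exact_mod_cast (by have := mem_range.mp hh; omega : 2 * (1 + h) ≤ 2 * (N + 1)))
    simpa using contDiffOn_iterate_laplaceBessel γ hS hS0 h hfh
  simp only [epdSeries, laplaceBessel_sum γ hS hx _ hsmooth, iterate_succ_apply']

theorem besselOp_epdSeries (hk : ∀ j < N, k + 1 + 2 * (j : ℝ) ≠ 0) (x : Fin n → ℝ) {t : ℝ}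
    (ht : t ≠ 0) :
    besselOp k (epdSeries γ k N f x) t
      = ∑ h ∈ range N, t ^ (2 * h) / epdCoeff k h * (laplaceBessel γ)^[h + 1] f x := by
  rw [epdSeries_eq_add_sum, besselOp_const_add_sum_mul_pow _ _ _ _ ht]
  refine sum_congr rfl fun j hj => ?_
  have hkj := hk j (mem_range.mp hj)
  have hEj := epdCoeff_ne_zero fun i (hi : i < j) => hk i (hi.trans (mem_range.mp hj))
  rw [epdCoeff_succ]
  field_simp
  ring

end Solution

theorem EPD_negative_odd_k_general
    (n : ℕ) (γ : Fin n → ℝ)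
    (m : ℕ) (k : ℝ) (hk : k = -(2 * (m : ℝ) + 3))
    (f : (Fin n → ℝ) → ℝ)
    (hf : ContDiffOn ℝ ((2 * (m + 2) : ℕ) : ℕ∞) f {x | ∀ i, 0 ≤ x i})
    (hpoly : ∀ x : Fin n → ℝ, (∀ i, 0 < x i) → (laplaceBessel γ)^[m + 2] f x = 0)
    (u : (Fin n → ℝ) → ℝ → ℝ)
    (hu : ∀ (x : Fin n → ℝ) (t : ℝ),
      u x t = f x + ∑ h ∈ Finset.Icc 1 (m + 1),
        ((laplaceBessel γ)^[h] f x / ∏ j ∈ Finset.range h, (k + 1 + 2 * (j : ℝ)))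
          * t ^ (2 * h) / ∏ j ∈ Finset.range h, (2 * (j : ℝ) + 2)) :
    (∀ x : Fin n → ℝ, (∀ i, 0 < x i) → ∀ t : ℝ, 0 < t →
      laplaceBessel γ (fun x' => u x' t) x
        = deriv (deriv (u x)) t + k / t * deriv (u x) t)
    ∧ (∀ x : Fin n → ℝ, (∀ i, 0 ≤ x i) → u x 0 = f x)
    ∧ (∀ x : Fin n → ℝ, (∀ i, 0 ≤ x i) → deriv (u x) 0 = 0) := by
  obtain rfl : u = epdSeries γ k (m + 1) f :=
    funext₂ fun x t => (hu x t).trans (add_sum_Icc_eq_epdSeries γ k (m + 1) f x t)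
  have hk0 : ∀ j < m + 1, k + 1 + 2 * (j : ℝ) ≠ 0 := fun j hj => by
    have : (j : ℝ) ≤ m := by exact_mod_cast Nat.lt_succ_iff.mp hj
    rw [hk]; linarith
  have hfS : ContDiffOn ℝ (2 * (m + 1 + 1) : ℕ) f {x | ∀ i, 0 < x i} := by
    exact_mod_cast hf.mono fun y (hy : ∀ i, 0 < y i) i => (hy i).le
  refine ⟨fun x hx t ht => ?_, fun x _ => by simp [epdSeries_eq_add_sum], fun x _ => ?_⟩
  · change _ = besselOp k _ t
    rw [laplaceBessel_epdSeries γ k (m + 1) f isOpen_setOf_forall_pos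
        (fun y hy i => (hy i).ne') hfS hx, besselOp_epdSeries γ k (m + 1) f hk0 x ht.ne',
      sum_range_succ, hpoly x hx, mul_zero, add_zero]
  · rw [epdSeries_eq_add_sum, deriv_const_add_sum_mul_pow]
    simp

/-- Let `k = -(2m+3)` (`m ∈ ℕ`), i.e. `k ∈ {-3,-5,-7,…}`, and let `f` be a
sufficiently smooth function on the closure of `ℝ^n_+`, even in each variable, which is
B-polyharmonic of order `(1-k)/2 = m+2`. Then
`u^k(x,t) = f(x) + Σ_{h=1}^{-(k+1)/2} [Δ_γ^h f(x)/((k+1)(k+3)⋯(k+2h-1))] · t^{2h}/(2·4⋯(2h))`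
solves `Δ_γ u = u_tt + (k/t) u_t` (`x ∈ ℝ^n_+`, `t > 0`) with `u(x,0) = f(x)`,
`u_t(x,0) = 0`. -/
theorem EPD_negative_odd_k
    (n : ℕ) (γ : Fin n → ℝ) (hγ : ∀ i, 0 < γ i)
    (m : ℕ) (k : ℝ) (hk : k = -(2 * (m : ℝ) + 3))
    (f : (Fin n → ℝ) → ℝ)
    (hf : ContDiffOn ℝ ((2 * (m + 2) : ℕ) : ℕ∞) f {x | ∀ i, 0 ≤ x i})
    (heven : ∀ (i : Fin n) (x : Fin n → ℝ), f (Function.update x i (-(x i))) = f x)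
    (hpoly : ∀ x : Fin n → ℝ, (∀ i, 0 < x i) → (laplaceBessel γ)^[m + 2] f x = 0)
    (u : (Fin n → ℝ) → ℝ → ℝ)
    (hu : ∀ (x : Fin n → ℝ) (t : ℝ),
      u x t = f x + ∑ h ∈ Finset.Icc 1 (m + 1),
        ((laplaceBessel γ)^[h] f x / ∏ j ∈ Finset.range h, (k + 1 + 2 * (j : ℝ)))
          * t ^ (2 * h) / ∏ j ∈ Finset.range h, (2 * (j : ℝ) + 2)) :
    (∀ x : Fin n → ℝ, (∀ i, 0 < x i) → ∀ t : ℝ, 0 < t →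
      laplaceBessel γ (fun x' => u x' t) x
        = deriv (deriv (u x)) t + k / t * deriv (u x) t)
    ∧ (∀ x : Fin n → ℝ, (∀ i, 0 ≤ x i) → u x 0 = f x)
    ∧ (∀ x : Fin n → ℝ, (∀ i, 0 ≤ x i) → deriv (u x) 0 = 0) :=
  EPD_negative_odd_k_general n γ m k hk f hf hpoly u hu
end
end
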